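/- Let $g$ assign to each smooth one-parameter family of states (classical or quantum) a nonnegative number (a metric on tangent vectors, not necessarily Riemannian) such that $g$ coincides with the classical Fisher information on families of probability distributions and is monotone non-increasing under classical-to-quantum channels. Then $g_{\rho_\theta}(\dot\rho_\theta, \dot\rho_\theta) \leq J^R_{\rho_\theta}(\dot\rho_\theta, \dot\rho_\theta)$ for every smooth family of strictly positive density operators. -/

import Mathlib

open Matrix BigOperators Filter
open scoped ComplexOrder

noncomputable section

/-- Apply a real function to a matrix via the spectral theorem (0 if not Hermitian). -/
def matFun {n : Type} [Fintype n] [DecidableEq n] (f : ℝ → ℝ)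
    (A : Matrix n n ℂ) : Matrix n n ℂ :=
  if hA : A.IsHermitian then hA.cfc f else 0

/-- Matrix logarithm (via spectral calculus). -/
def mlog {n : Type} [Fintype n] [DecidableEq n] (A : Matrix n n ℂ) : Matrix n n ℂ :=
  matFun Real.log A

/-- Matrix square root (via spectral calculus). -/
def msqrt {n : Type} [Fintype n] [DecidableEq n] (A : Matrix n n ℂ) : Matrix n n ℂ :=
  matFun Real.sqrt A

/-- Moore–Penrose (generalized) inverse of a Hermitian matrix. -/
def mpinv {n : Type} [Fintype n] [DecidableEq n] (A : Matrix n n ℂ) : Matrix n n ℂ :=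
  matFun (fun t => if t = 0 then 0 else t⁻¹) A

/-- Density operator predicate. -/
def IsDensity {n : Type} [Fintype n] [DecidableEq n] (ρ : Matrix n n ℂ) : Prop :=
  ρ.PosSemidef ∧ ρ.trace = 1

/-- Support of a matrix, as the range of the associated linear map. -/
def msupp {n : Type} [Fintype n] [DecidableEq n] (ρ : Matrix n n ℂ) :
    Submodule ℂ (n → ℂ) :=
  LinearMap.range ρ.mulVecLin

/-- Trace norm. -/
def traceNorm {n : Type} [Fintype n] [DecidableEq n] (A : Matrix n n ℂ) : ℝ :=
  (Matrix.trace (msqrt (Aᴴ * A))).re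

/-- Umegaki relative entropy. -/
def relEnt {n : Type} [Fintype n] [DecidableEq n] (ρ σ : Matrix n n ℂ) : ℝ :=
  (Matrix.trace (ρ * (mlog ρ - mlog σ))).re

/-- RLD (Belavkin–Staszewski) relative entropy. -/
def DR {n : Type} [Fintype n] [DecidableEq n] (ρ σ : Matrix n n ℂ) : ℝ :=
  (Matrix.trace (ρ * mlog (msqrt ρ * mpinv σ * msqrt ρ))).re

/-- Classical relative entropy of probability vectors. -/
def classRelEnt {X : Type} [Fintype X] (p q : X → ℝ) : ℝ :=
  ∑ x, p x * Real.log (p x / q x)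

/-- Probability vector predicate. -/
def IsProb {X : Type} [Fintype X] (p : X → ℝ) : Prop :=
  (∀ x, 0 ≤ p x) ∧ ∑ x, p x = 1

/-- A CPTP map given by a Kraus representation. -/
def IsCPTP {n m : Type} [Fintype n] [DecidableEq n] [Fintype m] [DecidableEq m]
    (Λ : Matrix n n ℂ → Matrix m m ℂ) : Prop :=
  ∃ (k : ℕ) (K : Fin k → Matrix m n ℂ),
    (∑ i, (K i)ᴴ * K i = 1) ∧ ∀ A, Λ A = ∑ i, K i * A * (K i)ᴴ

/-- n-fold tensor power of a matrix. -/
def tensorPow {d : Type} [Fintype d] [DecidableEq d]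
    (ρ : Matrix d d ℂ) (n : ℕ) : Matrix (Fin n → d) (Fin n → d) ℂ :=
  fun i j => ∏ k, ρ (i k) (j k)

/-- Outer product |u⟩⟨u|. -/
def outer {n : Type} [Fintype n] (u : n → ℂ) : Matrix n n ℂ :=
  Matrix.vecMulVec u (star u)

/-- RLD Fisher information of a state `ρ` with tangent `X` (where the RLD exists,
this equals `tr ρ L† L` with `X = L ρ`). -/
def JR {n : Type} [Fintype n] [DecidableEq n] (ρ X : Matrix n n ℂ) : ℝ :=
  (Matrix.trace (X * mpinv ρ * X)).re

end

/-!
Write `ρ = S Sᴴ` and diagonalise the Hermitian matrix `S⁻¹ X S⁻ᴴ = U diag(λ) Uᴴ`; with `V = S U`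
this is a simultaneous congruence `ρ = V Vᴴ`, `X = V diag(λ) Vᴴ`. If `v_x` are the columns of
`V` and `p_x = ‖v_x‖²`, the pure states `Φ_x = v_x v_xᴴ / p_x` define a classical-to-quantum
channel mapping the classical family `(p, λ p)` to `(ρ, X)`, and `Σ λ_x p_x = tr X = 0`.
Monotonicity bounds `g(ρ, X)` by the classical Fisher information `Σ λ_x² p_x`, which equals
`tr X ρ⁻¹ X = J^R(ρ, X)`.
-/

section

variable {n : Type} [Fintype n]

theorem trace_outer (u : n → ℂ) : (outer u).trace = ((∑ i, Complex.normSq (u i) : ℝ) : ℂ) := by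
  simp [outer, trace, vecMulVec_apply, Complex.mul_conj]

theorem sum_normSq_pos {u : n → ℂ} (hu : u ≠ 0) : 0 < ∑ i, Complex.normSq (u i) := by
  obtain ⟨i, hi⟩ := Function.ne_iff.mp hu
  exact Finset.sum_pos' (fun j _ => Complex.normSq_nonneg (u j))
    ⟨i, Finset.mem_univ i, Complex.normSq_pos.mpr hi⟩

variable [DecidableEq n]

theorem mpinv_eq_inv {A : Matrix n n ℂ} (hA : A.IsHermitian) (hu : IsUnit A) :
    mpinv A = A⁻¹ := by
  have hf : (fun t : ℝ => if t = 0 then 0 else t⁻¹) = fun t => t⁻¹ := by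
    funext t
    split_ifs with ht <;> simp [ht]
  rw [mpinv, matFun, dif_pos hA, ← hA.cfc_eq, hf, cfc_ringInverse_id A hu hA.isSelfAdjoint,
    nonsing_inv_eq_ringInverse]

theorem Matrix.col_ne_zero_of_isUnit {V : Matrix n n ℂ} (hV : IsUnit V) (x : n) : V.col x ≠ 0 := by
  intro h
  have := (mulVec_injective_iff_isUnit.mpr hV) (a₁ := Pi.single x 1) (a₂ := 0)
    (by rw [mulVec_single_one, h, mulVec_zero])
  simpa using congrFun this x

theorem sum_smul_outer_col (V : Matrix n n ℂ) (c : n → ℂ) :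
    ∑ x, c x • outer (V.col x) = V * diagonal c * Vᴴ := by
  ext i j
  rw [mul_apply]
  simp only [Matrix.sum_apply, Matrix.smul_apply, outer, vecMulVec_apply, mul_diagonal, col_apply,
    conjTranspose_apply, Pi.star_apply, smul_eq_mul]
  exact Finset.sum_congr rfl fun x _ => by ring

theorem Matrix.trace_mul_diagonal_mul_conjTranspose (V : Matrix n n ℂ) (c : n → ℝ) :
    (V * diagonal (fun x => (c x : ℂ)) * Vᴴ).trace
      = ((∑ x, c x * ∑ i, Complex.normSq (V i x) : ℝ) : ℂ) := by
  simp [← sum_smul_outer_col, trace_sum, trace_outer]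

theorem isDensity_inv_smul_outer {u : n → ℂ} (hu : u ≠ 0) :
    IsDensity (((∑ i, Complex.normSq (u i) : ℝ) : ℂ)⁻¹ • outer u) := by
  have hpos := sum_normSq_pos hu
  refine ⟨(posSemidef_vecMulVec_self_star u).smul ?_, ?_⟩
  · rw [← Complex.ofReal_inv]
    exact_mod_cast (inv_pos.mpr hpos).le
  · rw [trace_smul, trace_outer, smul_eq_mul, inv_mul_cancel₀]
    exact_mod_cast hpos.ne'

theorem exists_isDensity_sum_smul_eq {V : Matrix n n ℂ} (hV : IsUnit V) :
    ∃ Φ : n → Matrix n n ℂ, (∀ x, IsDensity (Φ x)) ∧ ∀ c : n → ℝ,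
      ∑ x, ((c x * ∑ i, Complex.normSq (V i x) : ℝ) : ℂ) • Φ x
        = V * diagonal (fun x => (c x : ℂ)) * Vᴴ := by
  refine ⟨fun x => ((∑ i, Complex.normSq (V i x) : ℝ) : ℂ)⁻¹ • outer (V.col x),
    fun x => isDensity_inv_smul_outer (col_ne_zero_of_isUnit hV x), fun c => ?_⟩
  have hp x : ((∑ i, Complex.normSq (V i x) : ℝ) : ℂ) ≠ 0 :=
    Complex.ofReal_ne_zero.mpr (sum_normSq_pos (col_ne_zero_of_isUnit hV x)).ne'
  simp only [Complex.ofReal_mul, mul_smul, smul_inv_smul₀ (hp _), sum_smul_outer_col]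

open scoped MatrixOrder in
theorem Matrix.PosDef.exists_eq_mul_conjTranspose_and_eq_mul_diagonal_mul {ρ X : Matrix n n ℂ}
    (hρ : ρ.PosDef) (hX : X.IsHermitian) :
    ∃ (V : Matrix n n ℂ) (lam : n → ℝ), IsUnit V ∧ ρ = V * Vᴴ ∧
      X = V * diagonal (fun x => (lam x : ℂ)) * Vᴴ := by
  obtain ⟨S, rfl⟩ := CStarAlgebra.nonneg_iff_eq_mul_star_self.mp hρ.posSemidef.nonneg
  have hS : IsUnit S.det := by
    have h := (isUnit_iff_isUnit_det _).mp hρ.isUnit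
    rw [det_mul] at h
    exact isUnit_of_mul_isUnit_left h
  have hM : (S⁻¹ * X * S⁻¹ᴴ).IsHermitian := isHermitian_mul_mul_conjTranspose _ hX
  set U : Matrix n n ℂ := (hM.eigenvectorUnitary : Matrix n n ℂ)
  have hU : U * star U = 1 := Unitary.mul_star_self_of_mem hM.eigenvectorUnitary.2
  have hspec : S⁻¹ * X * S⁻¹ᴴ = U * diagonal (fun x => (hM.eigenvalues x : ℂ)) * star U :=
    hM.spectral_theorem
  refine ⟨S * U, hM.eigenvalues, ((isUnit_iff_isUnit_det S).mpr hS).mul Unitary.isUnit_coe, ?_, ?_⟩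
  · rw [conjTranspose_mul, mul_assoc, ← mul_assoc U, ← star_eq_conjTranspose U, hU, one_mul,
      star_eq_conjTranspose]
  · calc X = (S * S⁻¹) * X * (S * S⁻¹)ᴴ := by simp [mul_nonsing_inv _ hS]
      _ = S * (U * diagonal (fun x => (hM.eigenvalues x : ℂ)) * star U) * Sᴴ := by
          rw [← hspec]
          simp only [conjTranspose_mul, mul_assoc]
      _ = S * U * diagonal (fun x => (hM.eigenvalues x : ℂ)) * (S * U)ᴴ := by
          simp only [conjTranspose_mul, star_eq_conjTranspose, mul_assoc]

theorem JR_mul_conjTranspose {V : Matrix n n ℂ} (hV : IsUnit V) (lam : n → ℝ) :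
    JR (V * Vᴴ) (V * diagonal (fun x => (lam x : ℂ)) * Vᴴ)
      = ∑ x, lam x ^ 2 * ∑ i, Complex.normSq (V i x) := by
  have hVh : IsUnit Vᴴ := (isUnit_conjTranspose V).mpr hV
  rw [JR, mpinv_eq_inv (isHermitian_mul_conjTranspose_self V) (hV.mul hVh), Matrix.mul_inv_rev]
  have hsq : V * diagonal (fun x => (lam x : ℂ)) * Vᴴ * (Vᴴ⁻¹ * V⁻¹)
      * (V * diagonal (fun x => (lam x : ℂ)) * Vᴴ)
      = V * diagonal (fun x => ((lam x ^ 2 : ℝ) : ℂ)) * Vᴴ := by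
    have hdet : IsUnit Vᴴ.det := (isUnit_iff_isUnit_det _).mp hVh
    have hdet' : IsUnit V.det := (isUnit_iff_isUnit_det _).mp hV
    calc _ = V * diagonal (fun x => (lam x : ℂ)) * (Vᴴ * Vᴴ⁻¹) * (V⁻¹ * V)
          * diagonal (fun x => (lam x : ℂ)) * Vᴴ := by simp only [mul_assoc]
      _ = _ := by
          rw [mul_nonsing_inv _ hdet, nonsing_inv_mul _ hdet', mul_one, mul_one, mul_assoc V,
            diagonal_mul_diagonal]
          push_cast
          simp only [sq]
  rw [hsq, trace_mul_diagonal_mul_conjTranspose, Complex.ofReal_re]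

end

/-- a (not necessarily Riemannian) metric `g` agreeing with classical
Fisher information on probability distributions and monotone under classical-to-quantum
channels is bounded above by the RLD Fisher information. -/
theorem stmt_13
    (g : (d : ℕ) → Matrix (Fin d) (Fin d) ℂ → Matrix (Fin d) (Fin d) ℂ → ℝ)
    (hnorm : ∀ (m : ℕ) (p dp : Fin m → ℝ), IsProb p → (∀ x, 0 < p x) → (∑ x, dp x = 0) →
      g m (Matrix.diagonal (fun x => (p x : ℂ))) (Matrix.diagonal (fun x => (dp x : ℂ)))
        = ∑ x, (dp x) ^ 2 / p x)
    (hmono : ∀ (m d : ℕ) (Φ : Fin m → Matrix (Fin d) (Fin d) ℂ), (∀ x, IsDensity (Φ x)) →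
      ∀ (p dp : Fin m → ℝ), IsProb p → (∑ x, dp x = 0) →
        g d (∑ x, (p x : ℂ) • Φ x) (∑ x, (dp x : ℂ) • Φ x) ≤
          g m (Matrix.diagonal (fun x => (p x : ℂ))) (Matrix.diagonal (fun x => (dp x : ℂ))))
    {d : ℕ} (ρ X : Matrix (Fin d) (Fin d) ℂ)
    (hρ : IsDensity ρ) (hpd : ρ.PosDef) (hX : X.IsHermitian) (hXtr : X.trace = 0) :
    g d ρ X ≤ JR ρ X := by
  obtain ⟨V, lam, hV, rfl, rfl⟩ := hpd.exists_eq_mul_conjTranspose_and_eq_mul_diagonal_mul hX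
  set p : Fin d → ℝ := fun x => ∑ i, Complex.normSq (V i x)
  have hp : ∀ x, 0 < p x := fun x => sum_normSq_pos (col_ne_zero_of_isUnit hV x)
  have hprob : IsProb p := by
    refine ⟨fun x => (hp x).le, ?_⟩
    have h := trace_mul_diagonal_mul_conjTranspose V 1
    simp only [Pi.one_apply, Complex.ofReal_one, diagonal_one, mul_one, one_mul, hρ.2] at h
    exact_mod_cast h.symm
  have hdp : ∑ x, lam x * p x = 0 := by
    have h := trace_mul_diagonal_mul_conjTranspose V lam
    rw [hXtr] at h
    exact_mod_cast h.symm
  obtain ⟨Φ, hΦ, hsum⟩ := exists_isDensity_sum_smul_eq hV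
  have hρΦ : ∑ x, (p x : ℂ) • Φ x = V * Vᴴ := by
    simpa only [Pi.one_apply, one_mul, Complex.ofReal_one, diagonal_one, mul_one] using hsum 1
  calc g d (V * Vᴴ) (V * diagonal (fun x => (lam x : ℂ)) * Vᴴ)
      = g d (∑ x, (p x : ℂ) • Φ x) (∑ x, ((lam x * p x : ℝ) : ℂ) • Φ x) := by rw [hρΦ, hsum]
    _ ≤ ∑ x, (lam x * p x) ^ 2 / p x := by
        rw [← hnorm d p _ hprob hp hdp]
        exact hmono d d Φ hΦ p _ hprob hdp
    _ = JR (V * Vᴴ) (V * diagonal (fun x => (lam x : ℂ)) * Vᴴ) := by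
        rw [JR_mul_conjTranspose hV]
        refine Finset.sum_congr rfl fun x _ => ?_
        rw [mul_pow, sq (p x), ← mul_assoc, mul_div_cancel_right₀ _ (hp x).ne']
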